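/- arXiv:2509.16359 — 2 statements merged into one kernel-verified Lean document; each statement's English description precedes it below -/
import Mathlib

section
/- Fix c > 0 and suppose that (w_r · P̂[t])² ≤ c for every rank r = 1,…,R and every time t ∈ ℕ, t ≥ 1. Then the regret per sample vanishes asymptotically: limsup_{τ → ∞} [ (1/τ) L_u(τ) − (1/τ) min_{1 ≤ r ≤ R} ℓ_r(τ) ] ≤ 0. -/
/-- Euclidean inner product on `ℝ^R`. -/
noncomputable def dotp {R : ℕ} (w v : Fin R → ℝ) : ℝ := ∑ i, w i * v i

/-- Cumulative loss `ℓ_r(t) = Σ_{t'=1}^{t} (w_r · P̂[t'])²` (so `ℓ_r(0) = 0`). -/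
noncomputable def cumLoss {R : ℕ} (w : Fin R → Fin R → ℝ) (P : ℕ → Fin R → ℝ)
    (r : Fin R) (t : ℕ) : ℝ :=
  ∑ t' ∈ Finset.Icc 1 t, (dotp (w r) (P t')) ^ 2

/-- Blending weights `μ_r(t) = exp(−ℓ_r(t−1)/(2c)) / Σ_k exp(−ℓ_k(t−1)/(2c))`. -/
noncomputable def blendWeight {R : ℕ} (c : ℝ) (w : Fin R → Fin R → ℝ)
    (P : ℕ → Fin R → ℝ) (r : Fin R) (t : ℕ) : ℝ :=
  Real.exp (-cumLoss w P r (t - 1) / (2 * c)) /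
    ∑ k, Real.exp (-cumLoss w P k (t - 1) / (2 * c))

/-- Universal weight vector `w_u[t] = Σ_r μ_r(t) w_r`. -/
noncomputable def univWeight {R : ℕ} (c : ℝ) (w : Fin R → Fin R → ℝ)
    (P : ℕ → Fin R → ℝ) (t : ℕ) : Fin R → ℝ :=
  ∑ r, blendWeight c w P r t • w r

/-- Universal cumulative loss `L_u(τ) = Σ_{t=1}^{τ} (w_u[t] · P̂[t])²`. -/
noncomputable def univLoss {R : ℕ} (c : ℝ) (w : Fin R → Fin R → ℝ)
    (P : ℕ → Fin R → ℝ) (τ : ℕ) : ℝ :=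
  ∑ t ∈ Finset.Icc 1 τ, (dotp (univWeight c w P t) (P t)) ^ 2

/-!
The universal filter is the exponentially weighted forecaster for the squared loss with
learning rate `1/(2c)`. Since `x ↦ exp (-x² / (2c))` is concave on `[-√c, √c]`, Jensen's
inequality shows that the potential `W(τ) = Σ_r exp (-ℓ_r(τ) / (2c))` drops at step `t` at least
by the factor `exp (-(w_u[t] · P̂[t])² / (2c))`. Telescoping gives `W(τ) ≤ R exp (-L_u(τ) / (2c))`,
while `W(τ) ≥ exp (-ℓ_r(τ) / (2c))` for every `r`; hence `L_u(τ) ≤ min_r ℓ_r(τ) + 2c log R`, and the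
per-sample regret is `O(1/τ)`.
-/

open Filter Real

lemma concaveOn_exp_neg_sq_div {c : ℝ} (hc : 0 < c) :
    ConcaveOn ℝ (Set.Icc (-√c) √c) fun x ↦ exp (-x ^ 2 / (2 * c)) := by
  have hderiv (x : ℝ) :
      HasDerivAt (fun x ↦ exp (-x ^ 2 / (2 * c))) (exp (-x ^ 2 / (2 * c)) * (-x / c)) x := by
    have hexponent : HasDerivAt (fun x : ℝ ↦ -x ^ 2 / (2 * c)) (-x / c) x :=
      (((hasDerivAt_pow 2 x).neg).div_const (2 * c)).congr_deriv (by field_simp; ring)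
    exact hexponent.exp
  have hderiv2 (x : ℝ) :
      HasDerivAt (fun x ↦ exp (-x ^ 2 / (2 * c)) * (-x / c))
        (exp (-x ^ 2 / (2 * c)) * ((x ^ 2 - c) / c ^ 2)) x :=
    ((hderiv x).mul ((hasDerivAt_neg x).div_const c)).congr_deriv (by field_simp; ring)
  refine concaveOn_of_hasDerivWithinAt2_nonpos (convex_Icc _ _) (by fun_prop)
    (fun x _ ↦ (hderiv x).hasDerivWithinAt) (fun x _ ↦ (hderiv2 x).hasDerivWithinAt) ?_
  intro x hx
  rw [interior_Icc] at hx
  have hx2 : x ^ 2 ≤ c := by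
    simpa [sq_sqrt hc.le] using sq_le_sq' hx.1.le hx.2.le
  exact mul_nonpos_of_nonneg_of_nonpos (exp_pos _).le
    (div_nonpos_of_nonpos_of_nonneg (by linarith) (by positivity))

lemma sum_mul_exp_neg_sq_div_le {ι : Type*} (s : Finset ι) {c : ℝ} (hc : 0 < c) {μ x : ι → ℝ}
    (hμ : ∀ i ∈ s, 0 ≤ μ i) (hμ_sum : ∑ i ∈ s, μ i = 1) (hx : ∀ i ∈ s, x i ^ 2 ≤ c) :
    ∑ i ∈ s, μ i * exp (-x i ^ 2 / (2 * c)) ≤ exp (-(∑ i ∈ s, μ i * x i) ^ 2 / (2 * c)) := by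
  have hmem : ∀ i ∈ s, x i ∈ Set.Icc (-√c) √c := fun i hi ↦ abs_le.mp (abs_le_sqrt (hx i hi))
  simpa only [smul_eq_mul] using (concaveOn_exp_neg_sq_div hc).le_map_sum hμ hμ_sum hmem

lemma limsup_le_zero_of_le_const_div {f : ℕ → ℝ} (C : ℝ)
    (hf : IsBoundedUnder (· ≥ ·) atTop f) (hle : ∀ τ, f τ ≤ C / τ) :
    limsup f atTop ≤ 0 := by
  have hC : Tendsto (fun τ : ℕ ↦ C / τ) atTop (nhds 0) := tendsto_const_div_atTop_nhds_zero_nat C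
  calc limsup f atTop ≤ limsup (fun τ : ℕ ↦ C / τ) atTop :=
        limsup_le_limsup (.of_forall hle) hf.isCoboundedUnder_le hC.isBoundedUnder_le
    _ = 0 := hC.limsup_eq

section UniversalFilter

variable {R : ℕ} {c : ℝ} (w : Fin R → Fin R → ℝ) (P : ℕ → Fin R → ℝ)

noncomputable def potential (c : ℝ) (τ : ℕ) : ℝ :=
  ∑ k, exp (-cumLoss w P k τ / (2 * c))

lemma potential_zero : potential w P c 0 = R := by
  simp [potential, cumLoss]

lemma potential_pos [NeZero R] (τ : ℕ) : 0 < potential w P c τ :=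
  Finset.sum_pos (fun _ _ ↦ exp_pos _) Finset.univ_nonempty

lemma exp_neg_cumLoss_le_potential (r : Fin R) (τ : ℕ) :
    exp (-cumLoss w P r τ / (2 * c)) ≤ potential w P c τ :=
  Finset.single_le_sum (f := fun k ↦ exp (-cumLoss w P k τ / (2 * c)))
    (fun _ _ ↦ (exp_pos _).le) (Finset.mem_univ r)

lemma cumLoss_succ (r : Fin R) (n : ℕ) :
    cumLoss w P r (n + 1) = cumLoss w P r n + dotp (w r) (P (n + 1)) ^ 2 :=
  Finset.sum_Icc_succ_top (by omega) _

lemma univLoss_succ (n : ℕ) :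
    univLoss c w P (n + 1) = univLoss c w P n + dotp (univWeight c w P (n + 1)) (P (n + 1)) ^ 2 :=
  Finset.sum_Icc_succ_top (by omega) _

lemma blendWeight_succ (r : Fin R) (n : ℕ) :
    blendWeight c w P r (n + 1) = exp (-cumLoss w P r n / (2 * c)) / potential w P c n :=
  rfl

lemma sum_blendWeight [NeZero R] (t : ℕ) : ∑ r, blendWeight c w P r t = 1 := by
  simp only [blendWeight, ← Finset.sum_div]
  exact div_self (potential_pos w P (t - 1)).ne'

lemma dotp_univWeight (t : ℕ) (v : Fin R → ℝ) :
    dotp (univWeight c w P t) v = ∑ r, blendWeight c w P r t * dotp (w r) v := by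
  simp only [dotp, univWeight, Finset.sum_apply, Pi.smul_apply, smul_eq_mul, Finset.sum_mul,
    Finset.mul_sum]
  rw [Finset.sum_comm]
  simp only [mul_assoc]

lemma potential_succ [NeZero R] (n : ℕ) :
    potential w P c (n + 1) = potential w P c n *
      ∑ r, blendWeight c w P r (n + 1) * exp (-dotp (w r) (P (n + 1)) ^ 2 / (2 * c)) := by
  rw [Finset.mul_sum]
  refine Finset.sum_congr rfl fun r _ ↦ ?_
  rw [cumLoss_succ, blendWeight_succ, ← mul_assoc, mul_div_cancel₀ _ (potential_pos w P n).ne',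
    ← exp_add]
  ring_nf

variable (hbound : ∀ r : Fin R, ∀ t : ℕ, 1 ≤ t → (dotp (w r) (P t)) ^ 2 ≤ c)
include hbound

lemma cumLoss_le (r : Fin R) (τ : ℕ) : cumLoss w P r τ ≤ τ * c :=
  calc cumLoss w P r τ ≤ ∑ _t ∈ Finset.Icc 1 τ, c :=
        Finset.sum_le_sum fun t ht ↦ hbound r t (Finset.mem_Icc.mp ht).1
    _ = τ * c := by simp

variable (hc : 0 < c)
include hc

lemma potential_succ_le [NeZero R] (n : ℕ) :
    potential w P c (n + 1) ≤
      potential w P c n * exp (-dotp (univWeight c w P (n + 1)) (P (n + 1)) ^ 2 / (2 * c)) := by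
  rw [potential_succ, dotp_univWeight]
  gcongr
  · exact (potential_pos w P n).le
  · exact sum_mul_exp_neg_sq_div_le _ hc (fun r _ ↦ div_nonneg (exp_pos _).le
      (potential_pos w P n).le) (sum_blendWeight w P _) (fun r _ ↦ hbound r _ (by omega))

lemma potential_le [NeZero R] (τ : ℕ) :
    potential w P c τ ≤ R * exp (-univLoss c w P τ / (2 * c)) := by
  induction τ with
  | zero => simp [potential_zero, univLoss]
  | succ n ih =>
    calc potential w P c (n + 1)
        ≤ potential w P c n *
            exp (-dotp (univWeight c w P (n + 1)) (P (n + 1)) ^ 2 / (2 * c)) :=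
          potential_succ_le w P hbound hc n
      _ ≤ R * exp (-univLoss c w P n / (2 * c)) *
            exp (-dotp (univWeight c w P (n + 1)) (P (n + 1)) ^ 2 / (2 * c)) := by gcongr
      _ = R * exp (-univLoss c w P (n + 1) / (2 * c)) := by
          rw [univLoss_succ, mul_assoc, ← exp_add]
          ring_nf

lemma univLoss_le_cumLoss_add [NeZero R] (r : Fin R) (τ : ℕ) :
    univLoss c w P τ ≤ cumLoss w P r τ + 2 * c * log R := by
  have hR : (0 : ℝ) < R := Nat.cast_pos.mpr (Nat.pos_of_neZero R)
  have hexp : exp (-cumLoss w P r τ / (2 * c)) ≤ exp (log R + -univLoss c w P τ / (2 * c)) := by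
    rw [exp_add, exp_log hR]
    exact (exp_neg_cumLoss_le_potential w P r τ).trans (potential_le w P hbound hc τ)
  have h2c : 0 < 2 * c := by positivity
  have hlog := exp_le_exp.mp hexp
  rw [add_div' _ _ _ h2c.ne', div_le_div_iff_of_pos_right h2c] at hlog
  linarith

end UniversalFilter

/-- Corollary of Theorem 1: if the squared filter outputs are uniformly bounded by `c`
for all times, the per-sample regret of the universal filter vanishes asymptotically. -/
theorem universalOSF_regret_vanishes {R : ℕ} (hR : 1 ≤ R) (c : ℝ) (hc : 0 < c)
    (w : Fin R → Fin R → ℝ) (P : ℕ → Fin R → ℝ)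
    (hbound : ∀ r : Fin R, ∀ t : ℕ, 1 ≤ t → (dotp (w r) (P t)) ^ 2 ≤ c) :
    Filter.limsup
      (fun τ : ℕ =>
        (1 / (τ : ℝ)) * univLoss c w P τ - (1 / (τ : ℝ)) * ⨅ r : Fin R, cumLoss w P r τ)
      Filter.atTop ≤ 0 := by
  have : NeZero R := ⟨by omega⟩
  refine limsup_le_zero_of_le_const_div (2 * c * log R) ?_ fun τ ↦ ?_
  · refine isBoundedUnder_of_eventually_ge (a := -c) ?_
    filter_upwards [eventually_gt_atTop 0] with τ hτ
    have hL : 0 ≤ univLoss c w P τ := Finset.sum_nonneg fun _ _ ↦ sq_nonneg _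
    have hmin : ⨅ r, cumLoss w P r τ ≤ τ * c :=
      (ciInf_le (Finite.bddBelow_range _) 0).trans (cumLoss_le w P hbound 0 τ)
    rw [← mul_sub, one_div_mul_eq_div, le_div_iff₀ (by exact_mod_cast hτ)]
    linarith
  · have hregret : univLoss c w P τ - ⨅ r, cumLoss w P r τ ≤ 2 * c * log R := by
      have := le_ciInf fun r ↦ sub_le_iff_le_add.mpr (univLoss_le_cumLoss_add w P hbound hc r τ)
      linarith
    rw [← mul_sub, one_div_mul_eq_div]
    exact div_le_div_of_nonneg_right hregret τ.cast_nonneg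
end

section
/- Let R ≥ 1 and let X_1, …, X_R be independent, identically distributed random variables, each exponentially distributed with mean λ > 0 (rate 1/λ). For 1 ≤ r ≤ R let X_(r) denote the r-th order statistic. Fix a threshold rank r₀ ∈ {1,…,R} and define the TLOSF weights w_r = 1/r₀ for 1 ≤ r < r₀ and w_{r₀} = (R − r₀ + 1)/r₀. Then the truncated linear order statistics filter Σ_{r=1}^{r₀} w_r X_(r) is an unbiased estimator: E[ Σ_{r=1}^{r₀} w_r X_(r) ] = λ. -/
open MeasureTheory ProbabilityTheory

/-- The `r`-th order statistic of the sample `x : Fin R → ℝ` (0-indexed: `orderStat x r`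
is the `(r+1)`-th smallest value of the sample). -/
noncomputable def orderStat {R : ℕ} (x : Fin R → ℝ) (r : Fin R) : ℝ := x (Tuple.sort x r)

/-!
Write `Q` for the `r₀`-th order statistic and `N t = #{i | t < Xᵢ}` for the number of survivors
at time `t`. The TLOSF equals `(∑ᵢ min Xᵢ Q) / r₀`, and `∑ᵢ min Xᵢ Q = ∫₀^Q N t dt` with
`t < Q ↔ R - r₀ + 1 ≤ N t`. By Tonelli the expectation of `∑ᵢ min Xᵢ Q` is
`∫₀^∞ E[N t; N t ≥ R - r₀ + 1] dt`, where `N t` is binomial with parameters `R` and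
`p t = exp (-t/λ)`. The term `k (R choose k) pᵏ (1 - p)^(R-k)` is `-λ` times the derivative in `t`
of the binomial tail `P(N t ≥ k)`, which decreases from `1` to `0`; so each of the `r₀` values
`k = R - r₀ + 1, …, R` contributes `λ`.
-/

open Finset Filter Topology Real
open scoped ENNReal

noncomputable def binomialTail (n k : ℕ) (p : ℝ) : ℝ :=
  ∑ l ∈ Icc k n, (n.choose l : ℝ) * p ^ l * (1 - p) ^ (n - l)

lemma binomialTail_zero {n k : ℕ} (hk : 1 ≤ k) : binomialTail n k 0 = 0 :=
  sum_eq_zero fun l hl => by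
    rw [zero_pow (by grind), mul_zero, zero_mul]

lemma binomialTail_one {n k : ℕ} (hk : k ≤ n) : binomialTail n k 1 = 1 := by
  rw [binomialTail, sum_eq_single_of_mem n (mem_Icc.2 ⟨hk, le_rfl⟩)]
  · simp
  · intro l hl hln
    rw [sub_self, zero_pow (by grind), mul_zero]

lemma hasDerivAt_binomialTail {n k : ℕ} (hk : k ≤ n) (p : ℝ) :
    HasDerivAt (binomialTail n k) (k * n.choose k * p ^ (k - 1) * (1 - p) ^ (n - k)) p := by
  set D : ℕ → ℝ := fun j => j * n.choose j * p ^ (j - 1) * (1 - p) ^ (n - j)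
  -- the derivative of the `l`-th term is `D l - D (l + 1)`, so the sum telescopes
  have hterm : ∀ l, HasDerivAt (fun p : ℝ => (n.choose l : ℝ) * p ^ l * (1 - p) ^ (n - l))
      (-(D (l + 1) - D l)) p := by
    intro l
    have hchoose : ((n.choose (l + 1) : ℕ) : ℝ) * (l + 1) = n.choose l * ((n - l : ℕ) : ℝ) := by
      exact_mod_cast Nat.choose_succ_right_eq n l
    refine (((hasDerivAt_pow l p).const_mul _).mul
      (((hasDerivAt_id p).const_sub 1).fun_pow (n - l))).congr_deriv ?_
    simp only [D, Nat.add_sub_cancel, Nat.sub_add_eq, id, Nat.cast_add, Nat.cast_one]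
    linear_combination p ^ l * (1 - p) ^ (n - l - 1) * hchoose
  have hsum := HasDerivAt.fun_sum (u := Icc k n) fun l _ => hterm l
  rw [sum_neg_distrib, sum_Icc_sub hk] at hsum
  simp only [D, Nat.choose_succ_self, Nat.cast_zero, mul_zero, zero_mul,
    zero_sub, neg_neg] at hsum
  exact hsum

lemma lintegral_Ioi_binomial_exp {n k : ℕ} (hk1 : 1 ≤ k) (hkn : k ≤ n) {r : ℝ} (hr : 0 < r) :
    ∫⁻ t in Set.Ioi 0, (k : ℝ≥0∞) * (n.choose k * ENNReal.ofReal (exp (-(r * t))) ^ k *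
      ENNReal.ofReal (1 - exp (-(r * t))) ^ (n - k)) = ENNReal.ofReal r⁻¹ := by
  set T : ℝ → ℝ := fun t => k * n.choose k * exp (-(r * t)) ^ k * (1 - exp (-(r * t))) ^ (n - k)
  have hG : ∀ t, HasDerivAt (fun t => -r⁻¹ * binomialTail n k (exp (-(r * t)))) (T t) t := by
    intro t
    have hexp : HasDerivAt (fun t => exp (-(r * t))) (exp (-(r * t)) * -r) t := by
      simpa using ((hasDerivAt_id t).const_mul r).neg.exp
    refine (((hasDerivAt_binomialTail hkn _).comp t hexp).const_mul _).congr_deriv ?_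
    simp only [T, ← pow_sub_one_mul (by omega : k ≠ 0) (exp (-(r * t)))]
    field_simp
  have hT : ∀ t ∈ Set.Ioi (0 : ℝ), 0 ≤ T t := fun t ht => by
    have : exp (-(r * t)) ≤ 1 := exp_le_one_iff.2 (by nlinarith [Set.mem_Ioi.1 ht])
    simp only [T]
    have := sub_nonneg.2 this
    positivity
  have hlim : Tendsto (fun t => -r⁻¹ * binomialTail n k (exp (-(r * t)))) atTop (𝓝 0) := by
    have hcont : Continuous (binomialTail n k) :=
      continuous_iff_continuousAt.2 fun p => (hasDerivAt_binomialTail hkn p).continuousAt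
    have hexp : Tendsto (fun t => exp (-(r * t))) atTop (𝓝 0) :=
      tendsto_exp_atBot.comp (tendsto_neg_atTop_atBot.comp (tendsto_id.const_mul_atTop hr))
    simpa [binomialTail_zero hk1] using ((hcont.tendsto 0).comp hexp).const_mul (-r⁻¹)
  calc ∫⁻ t in Set.Ioi 0, (k : ℝ≥0∞) * (n.choose k * ENNReal.ofReal (exp (-(r * t))) ^ k *
        ENNReal.ofReal (1 - exp (-(r * t))) ^ (n - k))
      = ∫⁻ t in Set.Ioi 0, ENNReal.ofReal (T t) := by
        refine setLIntegral_congr_fun measurableSet_Ioi fun t ht => ?_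
        have : exp (-(r * t)) ≤ 1 := exp_le_one_iff.2 (by nlinarith [Set.mem_Ioi.1 ht])
        simp only [T]
        rw [ENNReal.ofReal_mul (by positivity), ENNReal.ofReal_mul (by positivity),
          ENNReal.ofReal_mul (by positivity), ENNReal.ofReal_pow (by positivity),
          ENNReal.ofReal_pow (by linarith), ENNReal.ofReal_natCast, ENNReal.ofReal_natCast]
        ring
    _ = ENNReal.ofReal (∫ t in Set.Ioi 0, T t) :=
        (ofReal_integral_eq_lintegral_ofReal (integrableOn_Ioi_deriv_of_nonneg'
          (fun t _ => hG t) hT hlim) ((ae_restrict_iff' measurableSet_Ioi).2 (ae_of_all _ hT))).symm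
    _ = ENNReal.ofReal r⁻¹ := by
        rw [integral_Ioi_of_hasDerivAt_of_nonneg' (fun t _ => hG t) hT hlim]
        simp [binomialTail_one hkn]

section Exponential

variable {r : ℝ}

lemma expMeasure_Iic (hr : 0 < r) {t : ℝ} (ht : 0 ≤ t) :
    expMeasure r (Set.Iic t) = ENNReal.ofReal (1 - exp (-(r * t))) := by
  have := isProbabilityMeasure_expMeasure hr
  rw [← ofReal_cdf, cdf_expMeasure_eq hr, if_pos ht]

lemma expMeasure_Ioi (hr : 0 < r) {t : ℝ} (ht : 0 ≤ t) :
    expMeasure r (Set.Ioi t) = ENNReal.ofReal (exp (-(r * t))) := by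
  have := isProbabilityMeasure_expMeasure hr
  have hle : exp (-(r * t)) ≤ 1 := exp_le_one_iff.2 (by nlinarith)
  rw [← Set.compl_Iic, prob_compl_eq_one_sub measurableSet_Iic, expMeasure_Iic hr ht,
    ← ENNReal.ofReal_one, ← ENNReal.ofReal_sub _ (by linarith), sub_sub_cancel]

lemma ae_nonneg_expMeasure (hr : 0 < r) : ∀ᵐ x ∂expMeasure r, 0 ≤ x := by
  refine measure_mono_null (t := Set.Iic 0) (fun x (hx : ¬0 ≤ x) => (not_le.1 hx).le) ?_
  simp [expMeasure_Iic hr le_rfl]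

end Exponential

lemma setOf_filter_mem_eq {Ω ι β : Type*} [Fintype ι] [DecidableEq ι] {X : ι → Ω → β} {s : Set β}
    [DecidablePred (· ∈ s)] (S : Finset ι) :
    {ω | ({i | X i ω ∈ s} : Finset ι) = S} = ⋂ i, X i ⁻¹' (if i ∈ S then s else sᶜ) := by
  ext ω
  simp only [Set.mem_ofPred_eq, Set.mem_iInter, Set.mem_preimage, Finset.ext_iff, mem_filter,
    mem_univ, true_and]
  refine forall_congr' fun i => ?_
  by_cases hi : i ∈ S <;> simp [hi]

section Counting

variable {Ω ι β : Type*} [MeasurableSpace Ω] [MeasurableSpace β] [Fintype ι] [DecidableEq ι]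
  {μ : Measure Ω} {X : ι → Ω → β} {s : Set β} [DecidablePred (· ∈ s)]

lemma ProbabilityTheory.iIndepFun.measure_filter_mem_eq (hX : iIndepFun X μ)
    (hs : MeasurableSet s) {p q : ℝ≥0∞} (hp : ∀ i, μ (X i ⁻¹' s) = p)
    (hq : ∀ i, μ (X i ⁻¹' sᶜ) = q) (S : Finset ι) :
    μ {ω | ({i | X i ω ∈ s} : Finset ι) = S} = p ^ #S * q ^ (Fintype.card ι - #S) := by
  rw [setOf_filter_mem_eq, hX.meas_iInter fun i => ⟨_, by split_ifs <;> measurability, rfl⟩]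
  simp_rw [apply_ite, hp, hq]
  rw [prod_ite, prod_const, prod_const, filter_mem_eq_of_subset (subset_univ S),
    filter_notMem_eq_sdiff, card_univ_sdiff]

lemma ProbabilityTheory.iIndepFun.lintegral_comp_card_filter_mem (hX : iIndepFun X μ)
    (hmeas : ∀ i, Measurable (X i)) (hs : MeasurableSet s) {p q : ℝ≥0∞}
    (hp : ∀ i, μ (X i ⁻¹' s) = p) (hq : ∀ i, μ (X i ⁻¹' sᶜ) = q) (f : ℕ → ℝ≥0∞) :
    ∫⁻ ω, f #{i | X i ω ∈ s} ∂μ = ∑ k ∈ range (Fintype.card ι + 1),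
      f k * ((Fintype.card ι).choose k * p ^ k * q ^ (Fintype.card ι - k)) := by
  have hmeasS (S : Finset ι) : MeasurableSet {ω | ({i | X i ω ∈ s} : Finset ι) = S} := by
    rw [setOf_filter_mem_eq]
    exact .iInter fun i => hmeas i (by split_ifs <;> measurability)
  have hsplit (ω : Ω) : f #{i | X i ω ∈ s} =
      ∑ S, {ω | ({i | X i ω ∈ s} : Finset ι) = S}.indicator (fun _ => f #S) ω := by
    simp [Set.indicator_apply]
  simp_rw [hsplit]
  rw [lintegral_finsetSum _ fun S _ => measurable_const.indicator (hmeasS S)]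
  simp_rw [lintegral_indicator_const (hmeasS _), hX.measure_filter_mem_eq hs hp hq]
  rw [← powerset_univ, sum_powerset, card_univ]
  refine sum_congr rfl fun k _ => ?_
  rw [sum_powersetCard k univ fun j => f j * (p ^ j * q ^ (Fintype.card ι - j)), card_univ,
    nsmul_eq_mul]
  ring

end Counting

lemma measurable_card_filter_lt {α ι : Type*} [MeasurableSpace α] [Fintype ι] {f : ι → α → ℝ}
    (hf : ∀ i, Measurable (f i)) {g : α → ℝ} (hg : Measurable g) :
    Measurable fun a => #{i | g a < f i a} := by
  simp_rw [card_filter]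
  exact Finset.measurable_sum _ fun i _ =>
    Measurable.ite (measurableSet_lt hg (hf i)) measurable_const measurable_const

section OrderStat

variable {R : ℕ} (x : Fin R → ℝ)

lemma monotone_orderStat : Monotone (orderStat x) := Tuple.monotone_sort x

lemma card_lt_orderStat (t : ℝ) : #{j | t < orderStat x j} = #{i | t < x i} :=
  card_bij (fun j _ => Tuple.sort x j)
    (fun j hj => mem_filter.2 ⟨mem_univ _, (mem_filter.1 hj).2⟩)
    (fun _ _ _ _ h => (Tuple.sort x).injective h)
    (fun i hi => ⟨(Tuple.sort x).symm i,
      mem_filter.2 ⟨mem_univ _, by simpa [orderStat] using (mem_filter.1 hi).2⟩, by simp⟩)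

lemma lt_orderStat_iff (k : Fin R) (t : ℝ) : t < orderStat x k ↔ R - k ≤ #{i | t < x i} := by
  rw [← card_lt_orderStat]
  constructor
  · intro ht
    calc R - k = #(Ici k) := (Fin.card_Ici k).symm
      _ ≤ #{j | t < orderStat x j} := card_le_card fun j hj =>
        mem_filter.2 ⟨mem_univ j, ht.trans_le (monotone_orderStat x (mem_Ici.1 hj))⟩
  · intro hcard
    by_contra! ht
    have : #{j | t < orderStat x j} ≤ #(Ioi k) := card_le_card fun j hj =>
      mem_Ioi.2 (lt_of_not_ge fun hjk =>
        ((mem_filter.1 hj).2.trans_le (monotone_orderStat x hjk)).not_ge ht)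
    rw [Fin.card_Ioi] at this
    omega

lemma measurable_orderStat (k : Fin R) : Measurable fun x : Fin R → ℝ => orderStat x k := by
  refine measurable_of_Ioi fun t => ?_
  have : (fun x : Fin R → ℝ => orderStat x k) ⁻¹' Set.Ioi t = {x | R - k ≤ #{i | t < x i}} := by
    ext x
    exact lt_orderStat_iff x k t
  rw [this]
  exact measurableSet_le measurable_const
    (measurable_card_filter_lt (fun i => measurable_pi_apply i) measurable_const)

lemma sum_min_orderStat (k : Fin R) :
    ∑ i, min (x i) (orderStat x k) =
      ∑ j ∈ Iic k, orderStat x j + (R - 1 - k : ℕ) * orderStat x k := by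
  have hmin (j : Fin R) : min (orderStat x j) (orderStat x k) =
      if j ≤ k then orderStat x j else orderStat x k := by
    split_ifs with hjk
    · exact min_eq_left (monotone_orderStat x hjk)
    · exact min_eq_right (monotone_orderStat x (not_le.1 hjk).le)
  rw [← Equiv.sum_comp (Tuple.sort x)]
  simp_rw [← orderStat.eq_1, hmin]
  rw [sum_ite, filter_ge_eq_Iic, sum_const, ← Fin.card_Ioi, nsmul_eq_mul]
  simp_rw [not_le, filter_lt_eq_Ioi]

end OrderStat

lemma ofReal_sum_min_eq_lintegral {ι : Type*} [Fintype ι] {x : ι → ℝ} (hx : ∀ i, 0 ≤ x i) {c : ℝ}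
    (hc : 0 ≤ c) : ENNReal.ofReal (∑ i, min (x i) c) =
      ∫⁻ t in Set.Ioi 0, if t < c then (#{i | t < x i} : ℝ≥0∞) else 0 := by
  have hmin (i : ι) : ENNReal.ofReal (min (x i) c) =
      ∫⁻ t in Set.Ioi 0, (Set.Iio (min (x i) c)).indicator 1 t := by
    rw [lintegral_indicator_one measurableSet_Iio, Measure.restrict_apply measurableSet_Iio,
      Set.Iio_inter_Ioi, Real.volume_Ioo, sub_zero]
  rw [ENNReal.ofReal_sum_of_nonneg fun i _ => le_min (hx i) hc]
  simp_rw [hmin]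
  rw [← lintegral_finsetSum _ fun i _ => measurable_one.indicator measurableSet_Iio]
  congr with t
  by_cases ht : t < c <;> simp [Set.indicator_apply, ht]

lemma tlosf_eq_sum_min_div {R r₀ : ℕ} (hr1 : 1 ≤ r₀) (hrR : r₀ ≤ R) (x : Fin R → ℝ) :
    ∑ r : Fin r₀, (if (r : ℕ) + 1 < r₀ then (1 : ℝ) / r₀ else ((R : ℝ) - r₀ + 1) / r₀) *
        orderStat x (Fin.castLE hrR r) =
      (∑ i, min (x i) (orderStat x ⟨r₀ - 1, by omega⟩)) / r₀ := by
  obtain ⟨k, rfl⟩ := Nat.exists_eq_add_of_le' hr1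
  have hq : (⟨k + 1 - 1, by omega⟩ : Fin R) = Fin.castLE hrR (Fin.last k) := Fin.ext (by simp)
  rw [hq, sum_min_orderStat, Fin.sum_Iic_castLE, ← Fin.top_eq_last, Iic_top, Fin.top_eq_last,
    Fin.sum_univ_castSucc, Fin.sum_univ_castSucc]
  simp only [Fin.val_castSucc, Fin.val_last, Fin.val_castLE, Fin.castLE_castSucc,
    Order.lt_add_one_iff, Order.add_one_le_iff, Fin.is_lt, lt_self_iff_false, ↓reduceIte,
    Nat.cast_add, Nat.cast_one, one_div, ← mul_sum]
  rw [Nat.sub_sub, Nat.cast_sub (by omega)]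
  push_cast
  field_simp
  ring

section ExponentialSample

variable {Ω : Type*} [MeasurableSpace Ω] {μ : Measure Ω} {R : ℕ} {X : Fin R → Ω → ℝ} {r : ℝ}

lemma ae_forall_nonneg_of_map_eq_expMeasure (hr : 0 < r) (hmeas : ∀ i, Measurable (X i))
    (hdist : ∀ i, μ.map (X i) = expMeasure r) : ∀ᵐ ω ∂μ, ∀ i, 0 ≤ X i ω :=
  ae_all_iff.2 fun i =>
    ae_of_ae_map (hmeas i).aemeasurable ((hdist i).symm ▸ ae_nonneg_expMeasure hr)

lemma setLIntegral_lintegral_card_lt (hr : 0 < r) (hmeas : ∀ i, Measurable (X i))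
    (hindep : iIndepFun X μ) (hdist : ∀ i, μ.map (X i) = expMeasure r) (k : Fin R) :
    ∫⁻ t in Set.Ioi 0, ∫⁻ ω, (if R - k ≤ #{i | t < X i ω} then (#{i | t < X i ω} : ℝ≥0∞)
      else 0) ∂μ = (k + 1) * ENNReal.ofReal r⁻¹ := by
  have hkR := k.isLt
  have hprob (t : ℝ) (ht : 0 ≤ t) (i : Fin R) :
      μ (X i ⁻¹' Set.Ioi t) = ENNReal.ofReal (exp (-(r * t))) ∧
      μ (X i ⁻¹' (Set.Ioi t)ᶜ) = ENNReal.ofReal (1 - exp (-(r * t))) := by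
    rw [Set.compl_Ioi, ← Measure.map_apply (hmeas i) measurableSet_Ioi,
      ← Measure.map_apply (hmeas i) measurableSet_Iic, hdist, expMeasure_Ioi hr ht,
      expMeasure_Iic hr ht]
    exact ⟨rfl, rfl⟩
  have hcard : #{j ∈ range (R + 1) | R - k ≤ j} = k + 1 := by
    rw [show {j ∈ range (R + 1) | R - k ≤ j} = Icc (R - k) R by ext; simp; omega, Nat.card_Icc]
    omega
  calc _ = ∫⁻ t in Set.Ioi 0, ∑ j ∈ range (R + 1), (if R - k ≤ j then (j : ℝ≥0∞) else 0) *
        (R.choose j * ENNReal.ofReal (exp (-(r * t))) ^ j *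
          ENNReal.ofReal (1 - exp (-(r * t))) ^ (R - j)) := by
        refine setLIntegral_congr_fun measurableSet_Ioi fun t ht => ?_
        simpa using hindep.lintegral_comp_card_filter_mem hmeas measurableSet_Ioi
          (fun i => (hprob t ht.le i).1) (fun i => (hprob t ht.le i).2)
          (fun j => if R - k ≤ j then (j : ℝ≥0∞) else 0)
    _ = ∑ j ∈ range (R + 1), if R - k ≤ j then ENNReal.ofReal r⁻¹ else 0 := by
        rw [lintegral_finsetSum _ fun j _ => by fun_prop]
        refine sum_congr rfl fun j hj => ?_
        split_ifs with hkj
        · exact lintegral_Ioi_binomial_exp (by omega) (by grind) hr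
        · simp
    _ = (k + 1) * ENNReal.ofReal r⁻¹ := by
        rw [sum_ite, sum_const_zero, add_zero, sum_const, nsmul_eq_mul, hcard]
        push_cast
        rfl

lemma lintegral_ofReal_sum_min_orderStat [SFinite μ] (hr : 0 < r)
    (hmeas : ∀ i, Measurable (X i)) (hindep : iIndepFun X μ)
    (hdist : ∀ i, μ.map (X i) = expMeasure r) (k : Fin R) :
    ∫⁻ ω, ENNReal.ofReal (∑ i, min (X i ω) (orderStat (X · ω) k)) ∂μ =
      (k + 1) * ENNReal.ofReal r⁻¹ := by
  have hjoint : Measurable (Function.uncurry fun ω (t : ℝ) =>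
      if R - k ≤ #{i | t < X i ω} then (#{i | t < X i ω} : ℝ≥0∞) else 0) :=
    (measurable_from_nat (f := fun j => if R - k ≤ j then (j : ℝ≥0∞) else 0)).comp
      (measurable_card_filter_lt (fun i => (hmeas i).comp measurable_fst) measurable_snd)
  rw [← setLIntegral_lintegral_card_lt hr hmeas hindep hdist k,
    ← lintegral_lintegral_swap hjoint.aemeasurable]
  refine lintegral_congr_ae
    ((ae_forall_nonneg_of_map_eq_expMeasure hr hmeas hdist).mono fun ω hω => ?_)
  beta_reduce
  rw [ofReal_sum_min_eq_lintegral (c := orderStat (X · ω) k) hω (hω _)]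
  simp_rw [lt_orderStat_iff]

lemma integral_sum_min_orderStat [SFinite μ] (hr : 0 < r) (hmeas : ∀ i, Measurable (X i))
    (hindep : iIndepFun X μ) (hdist : ∀ i, μ.map (X i) = expMeasure r) (k : Fin R) :
    ∫ ω, ∑ i, min (X i ω) (orderStat (X · ω) k) ∂μ = (k + 1) / r := by
  have hQ : Measurable fun ω => orderStat (X · ω) k :=
    (measurable_orderStat k).comp (measurable_pi_lambda _ hmeas)
  rw [integral_eq_lintegral_of_nonneg_ae
      ((ae_forall_nonneg_of_map_eq_expMeasure hr hmeas hdist).mono fun ω hω =>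
        sum_nonneg fun i _ => le_min (hω i) (show 0 ≤ orderStat (X · ω) k from hω _))
      (Finset.measurable_sum _ fun i _ => (hmeas i).min hQ).aestronglyMeasurable,
    lintegral_ofReal_sum_min_orderStat hr hmeas hindep hdist k,
    ENNReal.toReal_mul, ENNReal.toReal_ofReal (inv_nonneg.2 hr.le), div_eq_mul_inv]
  norm_cast

end ExponentialSample

theorem tlosf_unbiased_general
    {Ω : Type*} [MeasurableSpace Ω] (μ : Measure Ω) [IsProbabilityMeasure μ]
    {R : ℕ} (lam : ℝ) (hlam : 0 < lam) (X : Fin R → Ω → ℝ)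
    (hmeas : ∀ i, Measurable (X i))
    (hindep : iIndepFun X μ)
    (hdist : ∀ i, Measure.map (X i) μ = expMeasure (1 / lam))
    (r₀ : ℕ) (hr1 : 1 ≤ r₀) (hrR : r₀ ≤ R) :
    ∫ ω, ∑ r : Fin r₀,
        (if (r : ℕ) + 1 < r₀ then (1 : ℝ) / r₀ else ((R : ℝ) - r₀ + 1) / r₀) *
          orderStat (fun i => X i ω) (Fin.castLE hrR r) ∂μ = lam := by
  simp_rw [tlosf_eq_sum_min_div hr1 hrR]
  rw [integral_div, integral_sum_min_orderStat (by positivity) hmeas hindep hdist,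
    Nat.cast_sub hr1]
  field_simp
  ring

/-- Unbiasedness of the TLOSF (paper equations (5)–(6)): for `R` i.i.d. exponential
random variables with mean `λ`, the weighted sum of the order statistics up to the
threshold rank `r₀`, with weights `w_r = 1/r₀` for `r < r₀` and
`w_{r₀} = (R − r₀ + 1)/r₀`, has expectation `λ`.  (The index `r : Fin r₀` represents
the rank `r + 1`.) -/
theorem tlosf_unbiased
    {Ω : Type*} [MeasurableSpace Ω] (μ : Measure Ω) [IsProbabilityMeasure μ]
    {R : ℕ} (hR : 1 ≤ R) (lam : ℝ) (hlam : 0 < lam) (X : Fin R → Ω → ℝ)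
    (hmeas : ∀ i, Measurable (X i))
    (hindep : iIndepFun X μ)
    (hdist : ∀ i, Measure.map (X i) μ = expMeasure (1 / lam))
    (r₀ : ℕ) (hr1 : 1 ≤ r₀) (hrR : r₀ ≤ R) :
    ∫ ω, ∑ r : Fin r₀,
        (if (r : ℕ) + 1 < r₀ then (1 : ℝ) / r₀ else ((R : ℝ) - r₀ + 1) / r₀) *
          orderStat (fun i => X i ω) (Fin.castLE hrR r) ∂μ = lam :=
  tlosf_unbiased_general μ lam hlam X hmeas hindep hdist r₀ hr1 hrR
end
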